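/- arXiv:2603.10318 — 3 statements merged into one kernel-verified Lean document; each statement's English description precedes it below -/
import Mathlib

section
/- For π-reversible positive-semidefinite P and nontrivial S ⊂ X, the Frobenius distance admits the decomposition ‖G_S P G_S − Π‖_{F,π} = [3 − 1/(π(S)π(S'))] + (1/π(S)) Σ_{x,y∈S'} π(x)P(x,y) + (1/π(S')) Σ_{x,y∈S} π(x)P(x,y), where the first bracket is a submodular function of S and the other two summands are supermodular functions of S. -/
open Finset Matrix

namespace GpgStmt

noncomputable section

variable {X : Type*}

/-- Matrix with all rows equal to π. -/
def Pimat {X : Type*} (π : X → ℝ) : Matrix X X ℝ := Matrix.of fun _ y => π y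

def IsStochastic [Fintype X] (P : Matrix X X ℝ) : Prop :=
  (∀ x y, 0 ≤ P x y) ∧ ∀ x, ∑ y, P x y = 1

/-- π-stationary transition matrix. -/
def IsStationary [Fintype X] (π : X → ℝ) (P : Matrix X X ℝ) : Prop :=
  IsStochastic P ∧ ∀ y, ∑ x, π x * P x y = π y

/-- π-reversible transition matrix. -/
def IsReversible [Fintype X] (π : X → ℝ) (P : Matrix X X ℝ) : Prop :=
  IsStochastic P ∧ ∀ x y, π x * P x y = π y * P y x

/-- mass of the orbit O_i = {x | o x = i}. -/
def orbMass [Fintype X] {k : ℕ} (π : X → ℝ) (o : X → Fin k) (i : Fin k) : ℝ :=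
  ∑ x ∈ Finset.filter (fun x => o x = i) Finset.univ, π x

/-- Gibbs kernel of the orbit partition induced by o. -/
def gibbs [Fintype X] {k : ℕ} (π : X → ℝ) (o : X → Fin k) : Matrix X X ℝ :=
  Matrix.of fun x y => if o x = o y then π y / orbMass π o (o x) else 0

/-- Projection chain P̄ of P with respect to the orbit partition induced by o. -/
def projChain [Fintype X] {k : ℕ} (π : X → ℝ) (o : X → Fin k) (P : Matrix X X ℝ) :
    Matrix (Fin k) (Fin k) ℝ :=
  Matrix.of fun i j => (1 / orbMass π o i) *
    ∑ x ∈ Finset.filter (fun x => o x = i) Finset.univ,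
      ∑ y ∈ Finset.filter (fun y => o y = j) Finset.univ, π x * P x y

/-- π-weighted KL divergence between transition matrices, with 0·log(0/a) = 0. -/
def klDiv {X : Type*} [Fintype X] (π : X → ℝ) (Q R : Matrix X X ℝ) : ℝ :=
  ∑ x, ∑ y, π x * Q x y * Real.log (Q x y / R x y)

/-- ℓ²(π)-adjoint of a matrix. -/
def piAdj [Fintype X] (π : X → ℝ) (M : Matrix X X ℝ) : Matrix X X ℝ :=
  Matrix.of fun x y => π y * M y x / π x

/-- squared π-weighted Frobenius norm ‖M‖²_{F,π} = Tr(M*M). -/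
def frobSq [Fintype X] (π : X → ℝ) (M : Matrix X X ℝ) : ℝ :=
  Matrix.trace (piAdj π M * M)

/-- π-mass of a finite set. -/
def mass [Fintype X] (π : X → ℝ) (S : Finset X) : ℝ := ∑ x ∈ S, π x

/-- Two-block Gibbs kernel G_S for the partition X = S ⊔ Sᶜ. -/
def gibbsTwo [Fintype X] [DecidableEq X] (π : X → ℝ) (S : Finset X) : Matrix X X ℝ :=
  Matrix.of fun x y =>
    if x ∈ S then (if y ∈ S then π y / mass π S else 0)
    else (if y ∈ S then 0 else π y / mass π Sᶜ)

/-- g(S) = (1/(π(S)π(S'))) Σ_{x∈S,y∈S'} π(x) P²(x,y). -/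
def gfun [Fintype X] [DecidableEq X] (π : X → ℝ) (P : Matrix X X ℝ) (S : Finset X) : ℝ :=
  (1 / (mass π S * mass π Sᶜ)) * ∑ x ∈ S, ∑ y ∈ Sᶜ, π x * (P * P) x y

/-- h(S) = (1/π(S)) Σ_{x∈S,y∈S'} π(x) P²(x,y). -/
def hfun [Fintype X] [DecidableEq X] (π : X → ℝ) (P : Matrix X X ℝ) (S : Finset X) : ℝ :=
  (1 / mass π S) * ∑ x ∈ S, ∑ y ∈ Sᶜ, π x * (P * P) x y

/-- Ergodicity (primitivity): some power of P has all entries positive. -/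
def IsErgodic [Fintype X] [DecidableEq X] (P : Matrix X X ℝ) : Prop :=
  ∃ m : ℕ, ∀ x y, 0 < (P ^ m) x y

/-- Shannon entropy of π. -/
def shannonEnt [Fintype X] (π : X → ℝ) : ℝ := -∑ x, π x * Real.log (π x)

/-- Entropy rate H_π(Q). -/
def entRate [Fintype X] (π : X → ℝ) (Q : Matrix X X ℝ) : ℝ :=
  -∑ x, ∑ y, π x * Q x y * Real.log (Q x y)

/-- Supermodular set function on 2^X. -/
def Supermodular {X : Type*} [DecidableEq X] (F : Finset X → ℝ) : Prop :=
  ∀ A B : Finset X, F A + F B ≤ F (A ∩ B) + F (A ∪ B)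

/-- Submodular set function on 2^X. -/
def Submodular {X : Type*} [DecidableEq X] (F : Finset X → ℝ) : Prop :=
  ∀ A B : Finset X, F (A ∩ B) + F (A ∪ B) ≤ F A + F B

/-- Positive semidefiniteness with respect to ⟨·,·⟩_π. -/
def IsPosSemidefPi [Fintype X] (π : X → ℝ) (P : Matrix X X ℝ) : Prop :=
  ∀ f : X → ℝ, 0 ≤ ∑ x, ∑ y, π x * f x * P x y * f y

/-- Nontrivial subsets, i.e. 0 < π(S) < 1. -/
def NontrivSet {X : Type*} [Fintype X] (S : Finset X) : Prop := S ≠ ∅ ∧ S ≠ Finset.univ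

/-- Supermodularity restricted to the nontrivial subsets. -/
def SupermodularOn {X : Type*} [Fintype X] [DecidableEq X] (F : Finset X → ℝ) : Prop :=
  ∀ A B : Finset X, NontrivSet A → NontrivSet B → NontrivSet (A ∩ B) →
    NontrivSet (A ∪ B) → F A + F B ≤ F (A ∩ B) + F (A ∪ B)

/-- Submodularity restricted to the nontrivial subsets. -/
def SubmodularOn {X : Type*} [Fintype X] [DecidableEq X] (F : Finset X → ℝ) : Prop :=
  ∀ A B : Finset X, NontrivSet A → NontrivSet B → NontrivSet (A ∩ B) →
    NontrivSet (A ∪ B) → F (A ∩ B) + F (A ∪ B) ≤ F A + F B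

/-!
Write `a = π(S)`, `b = π(S') = 1 - a` and `Q(A, B) = ∑_{x ∈ A, y ∈ B} π(x) P(x, y)` (`flow`).
Row-stochasticity and reversibility express every block flow through `q = Q(S, S')`:
`Q(S, S) = a - q`, `Q(S', S) = q`, `Q(S', S') = b - q`. As
`(G_S P G_S)(x, y) = π(y) Q(I, J) / (π(I) π(J))` for `x ∈ I`, `y ∈ J`, the squared norm is a
sum of four block terms which collapses to `(1 - q / (a b))²`. Positive semidefiniteness gives
`q ≤ a b`, and expanding `1 - q / (a b)` with `a + b = 1` gives the decomposition.

For the lattice statements, `1 / (a b) = 1 / a + 1 / b`, and `T ↦ 1 / π(T)` is supermodular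
because `t ↦ 1 / t` is convex and `π` is modular; complementation preserves supermodularity.
The two remaining terms are products of `T ↦ 1 / π(T')` and `T ↦ Q(T, T)` (up to complementing
`T`), which are nonnegative, increasing and supermodular.
-/

theorem _root_.ConvexOn.add_le_add_of_le_of_add_eq {D : Set ℝ} {φ : ℝ → ℝ} (hφ : ConvexOn ℝ D φ)
    {s x y w : ℝ} (hs : s ∈ D) (hw : w ∈ D) (hsx : s ≤ x) (hsy : s ≤ y) (h : x + y = s + w) :
    φ x + φ y ≤ φ s + φ w := by
  rcases (show s ≤ w by linarith).eq_or_lt with rfl | hsw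
  · obtain rfl : x = s := by linarith
    obtain rfl : y = x := by linarith
    rfl
  -- `x` and `y` are the two convex combinations of `s` and `w` with swapped weights
  have hd : 0 < w - s := sub_pos.2 hsw
  have comb : ∀ z, s ≤ z → z ≤ w → φ z ≤ (w - z) / (w - s) * φ s + (z - s) / (w - s) * φ w := by
    intro z hsz hzw
    have hz : (w - z) / (w - s) * s + (z - s) / (w - s) * w = z := by field_simp; ring
    simpa only [smul_eq_mul, hz] using hφ.2 hs hw (div_nonneg (sub_nonneg.2 hzw) hd.le)
      (div_nonneg (sub_nonneg.2 hsz) hd.le) (by field_simp; ring)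
  have hx := comb x hsx (by linarith)
  have hy := comb y hsy (by linarith)
  rw [show w - y = x - s by linarith, show y - s = w - x by linarith] at hy
  have hsum : (w - x) / (w - s) + (x - s) / (w - s) = 1 := by field_simp; ring
  linear_combination hx + hy + (φ s + φ w) * hsum

section Lattice

variable [Fintype X] [DecidableEq X] {F G : Finset X → ℝ}

theorem Supermodular.supermodularOn (hF : Supermodular F) : SupermodularOn F :=
  fun A B _ _ _ _ => hF A B

theorem SupermodularOn.add (hF : SupermodularOn F) (hG : SupermodularOn G) :
    SupermodularOn (fun T => F T + G T) := fun A B hA hB hI hU => by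
  linarith [hF A B hA hB hI hU, hG A B hA hB hI hU]

theorem SupermodularOn.congr (hF : SupermodularOn F) (h : ∀ T, NontrivSet T → F T = G T) :
    SupermodularOn G := fun A B hA hB hI hU => by
  rw [← h A hA, ← h B hB, ← h _ hI, ← h _ hU]
  exact hF A B hA hB hI hU

theorem SupermodularOn.const_sub (hF : SupermodularOn F) (c : ℝ) :
    SubmodularOn (fun T => c - F T) := fun A B hA hB hI hU => by
  linarith [hF A B hA hB hI hU]

theorem NontrivSet.compl {T : Finset X} (hT : NontrivSet T) : NontrivSet Tᶜ := by
  rw [NontrivSet, Ne, Ne, compl_eq_empty_iff, compl_eq_univ_iff]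
  exact hT.symm

theorem SupermodularOn.comp_compl (hF : SupermodularOn F) : SupermodularOn (fun T => F Tᶜ) :=
  fun A B hA hB hI hU => by
    have := hF Aᶜ Bᶜ hA.compl hB.compl (by rw [← compl_union]; exact hU.compl)
      (by rw [← compl_inter]; exact hI.compl)
    rw [← compl_union, ← compl_inter] at this
    linarith

theorem SupermodularOn.mul (hF : SupermodularOn F) (hG : SupermodularOn G)
    (hF₀ : ∀ T, NontrivSet T → 0 ≤ F T) (hG₀ : ∀ T, NontrivSet T → 0 ≤ G T)
    (hFm : MonotoneOn F {T | NontrivSet T}) (hGm : MonotoneOn G {T | NontrivSet T}) :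
    SupermodularOn (fun T => F T * G T) := fun A B hA hB hI hU => by
  have hFIA := hFm hI hA inter_subset_left
  have hFAU := hFm hA hU subset_union_left
  have hGIB := hGm hI hB inter_subset_right
  have hGBU := hGm hB hU subset_union_right
  nlinarith [hF A B hA hB hI hU, hG A B hA hB hI hU, hF₀ A hA, hG₀ B hB,
    mul_nonneg (sub_nonneg.2 hFAU) (sub_nonneg.2 hGBU),
    mul_nonneg (sub_nonneg.2 hFIA) (sub_nonneg.2 hGIB)]

end Lattice

section Mass

variable [Fintype X] {π : X → ℝ}

theorem mass_pos (hπ : ∀ x, 0 < π x) {T : Finset X} (hT : T ≠ ∅) : 0 < mass π T :=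
  sum_pos (fun x _ => hπ x) (nonempty_of_ne_empty hT)

theorem mass_mono (hπ : ∀ x, 0 < π x) {T₁ T₂ : Finset X} (h : T₁ ⊆ T₂) :
    mass π T₁ ≤ mass π T₂ :=
  sum_le_sum_of_subset_of_nonneg h fun x _ _ => (hπ x).le

variable [DecidableEq X]

theorem mass_add_mass_compl (hsum : ∑ x, π x = 1) (T : Finset X) :
    mass π T + mass π Tᶜ = 1 :=
  (sum_add_sum_compl T π).trans hsum

theorem mass_add_mass (A B : Finset X) :
    mass π A + mass π B = mass π (A ∩ B) + mass π (A ∪ B) := by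
  rw [add_comm (mass π (A ∩ B))]
  exact sum_union_inter.symm

theorem supermodularOn_one_div_mass (hπ : ∀ x, 0 < π x) :
    SupermodularOn (fun T : Finset X => 1 / mass π T) := fun A B _ _ hI hU => by
  simpa only [_root_.zpow_neg_one, one_div] using
    (convexOn_zpow (𝕜 := ℝ) (-1)).add_le_add_of_le_of_add_eq (mass_pos hπ hI.1)
      (mass_pos hπ hU.1)
      (mass_mono hπ inter_subset_left) (mass_mono hπ inter_subset_right) (mass_add_mass A B)

theorem supermodularOn_one_div_mass_compl (hπ : ∀ x, 0 < π x) :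
    SupermodularOn (fun T : Finset X => 1 / mass π Tᶜ) :=
  (supermodularOn_one_div_mass hπ).comp_compl

theorem monotoneOn_one_div_mass_compl (hπ : ∀ x, 0 < π x) :
    MonotoneOn (fun T : Finset X => 1 / mass π Tᶜ) {T | NontrivSet T} :=
  fun _ _ _ hB hAB =>
    one_div_le_one_div_of_le (mass_pos hπ hB.compl.1) (mass_mono hπ (compl_subset_compl.2 hAB))

theorem supermodularOn_one_div_mass_mul_mass_compl (hπ : ∀ x, 0 < π x)
    (hsum : ∑ x, π x = 1) :
    SupermodularOn (fun T : Finset X => 1 / (mass π T * mass π Tᶜ)) :=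
  ((supermodularOn_one_div_mass hπ).add (supermodularOn_one_div_mass_compl hπ)).congr
    fun T hT => by
      have := mass_add_mass_compl hsum T
      have := mass_pos hπ hT.1
      have := mass_pos hπ hT.compl.1
      field_simp
      linarith

end Mass

theorem monotone_sum_sum {w : X → X → ℝ} (hw : ∀ x y, 0 ≤ w x y) :
    Monotone (fun T : Finset X => ∑ x ∈ T, ∑ y ∈ T, w x y) := fun _ _ h => by
  simp only [← sum_product']
  exact sum_le_sum_of_subset_of_nonneg (product_subset_product h h) fun _ _ _ => hw _ _

theorem supermodular_sum_sum [DecidableEq X] {w : X → X → ℝ} (hw : ∀ x y, 0 ≤ w x y) :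
    Supermodular (fun T : Finset X => ∑ x ∈ T, ∑ y ∈ T, w x y) := fun A B => by
  simp only [← sum_product', ← product_inter_product]
  rw [← sum_union_inter, add_comm]
  gcongr
  · exact fun _ _ _ => hw _ _
  · exact union_subset (product_subset_product subset_union_left subset_union_left)
      (product_subset_product subset_union_right subset_union_right)

section Supermodularity

variable [Fintype X] [DecidableEq X] {π : X → ℝ} {P : Matrix X X ℝ}

theorem supermodularOn_one_div_mass_compl_mul_sum_sum (hπ : ∀ x, 0 < π x)
    (hP : ∀ x y, 0 ≤ P x y) :
    SupermodularOn (fun T : Finset X => 1 / mass π Tᶜ * ∑ x ∈ T, ∑ y ∈ T, π x * P x y) :=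
  have hw : ∀ x y, 0 ≤ π x * P x y := fun x y => mul_nonneg (hπ x).le (hP x y)
  (supermodularOn_one_div_mass_compl hπ).mul (supermodular_sum_sum hw).supermodularOn
    (fun _ hT => one_div_nonneg.2 (mass_pos hπ hT.compl.1).le)
    (fun _ _ => sum_nonneg fun x _ => sum_nonneg fun y _ => hw x y)
    (monotoneOn_one_div_mass_compl hπ) ((monotone_sum_sum hw).monotoneOn _)

end Supermodularity

def flow (π : X → ℝ) (P : Matrix X X ℝ) (A B : Finset X) : ℝ := ∑ x ∈ A, ∑ y ∈ B, π x * P x y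

section Flow

variable {π : X → ℝ} {P : Matrix X X ℝ}

theorem flow_comm (hP : ∀ x y, π x * P x y = π y * P y x) (A B : Finset X) :
    flow π P A B = flow π P B A := by
  rw [flow, sum_comm]
  exact sum_congr rfl fun y _ => sum_congr rfl fun x _ => hP x y

variable [Fintype X] [DecidableEq X]

variable (π) in
theorem flow_add_flow_compl (hP : ∀ x, ∑ y, P x y = 1) (A B : Finset X) :
    flow π P A B + flow π P A Bᶜ = mass π A := by
  rw [flow, flow, ← sum_add_distrib]
  refine sum_congr rfl fun x _ => ?_
  rw [← mul_sum, ← mul_sum, ← mul_add, sum_add_sum_compl, hP, mul_one]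

variable (π) in
theorem flow_self (hP : ∀ x, ∑ y, P x y = 1) (A : Finset X) :
    flow π P A A = mass π A - flow π P A Aᶜ := by
  linarith [flow_add_flow_compl π hP A A]

theorem flow_compl_self (hP : IsReversible π P) (A : Finset X) :
    flow π P Aᶜ Aᶜ = mass π Aᶜ - flow π P A Aᶜ := by
  have := flow_add_flow_compl π hP.1.2 Aᶜ Aᶜ
  rw [compl_compl, flow_comm hP.2 Aᶜ A] at this
  linarith

end Flow

section Blocks

variable [Fintype X] [DecidableEq X]

theorem sum_sum_eq_blocks (S : Finset X) (F : X → X → ℝ) :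
    ∑ x, ∑ y, F x y = ∑ x ∈ S, ∑ y ∈ S, F x y + ∑ x ∈ S, ∑ y ∈ Sᶜ, F x y
      + ∑ x ∈ Sᶜ, ∑ y ∈ S, F x y + ∑ x ∈ Sᶜ, ∑ y ∈ Sᶜ, F x y := by
  have h x : ∑ y, F x y = ∑ y ∈ S, F x y + ∑ y ∈ Sᶜ, F x y := (sum_add_sum_compl S _).symm
  rw [← sum_add_sum_compl S]
  simp only [h, sum_add_distrib]
  ring

omit [Fintype X] [DecidableEq X] in
theorem sum_sum_mul_eq_of_forall {A B : Finset X} {w κ : X → X → ℝ} {k : ℝ}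
    (h : ∀ x ∈ A, ∀ y ∈ B, κ x y = k) :
    ∑ x ∈ A, ∑ y ∈ B, w x y * κ x y = k * ∑ x ∈ A, ∑ y ∈ B, w x y := by
  rw [mul_sum]
  refine sum_congr rfl fun x hx => ?_
  rw [mul_sum]
  exact sum_congr rfl fun y hy => by rw [h x hx y hy, mul_comm]

theorem sum_sum_quadForm_ite (π : X → ℝ) (P : Matrix X X ℝ) (S : Finset X) (c d : ℝ) :
    ∑ x, ∑ y, π x * (if x ∈ S then c else d) * P x y * (if y ∈ S then c else d)
      = c * c * flow π P S S + c * d * flow π P S Sᶜ + d * c * flow π P Sᶜ S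
        + d * d * flow π P Sᶜ Sᶜ := by
  have hS : ∀ x ∈ S, (if x ∈ S then c else d) = c := fun x hx => if_pos hx
  have hS' : ∀ x ∈ Sᶜ, (if x ∈ S then c else d) = d := fun x hx => if_neg (mem_compl.1 hx)
  simp_rw [mul_right_comm _ _ (P _ _), mul_assoc (π _ * P _ _)]
  rw [sum_sum_eq_blocks S]
  rw [sum_sum_mul_eq_of_forall fun x hx y hy => by rw [hS x hx, hS y hy],
    sum_sum_mul_eq_of_forall fun x hx y hy => by rw [hS x hx, hS' y hy],
    sum_sum_mul_eq_of_forall fun x hx y hy => by rw [hS' x hx, hS y hy],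
    sum_sum_mul_eq_of_forall fun x hx y hy => by rw [hS' x hx, hS' y hy]]
  rfl

end Blocks

theorem flow_le_mass_mul_mass_compl [Fintype X] [DecidableEq X] {π : X → ℝ}
    {P : Matrix X X ℝ} (hsum : ∑ x, π x = 1) (hP : IsReversible π P)
    (hpsd : IsPosSemidefPi π P) (S : Finset X) :
    flow π P S Sᶜ ≤ mass π S * mass π Sᶜ := by
  -- the quadratic form of `π(S') 1_S - π(S) 1_{S'}` equals `π(S) π(S') - Q(S, S')`
  have hQ := hpsd fun x => if x ∈ S then mass π Sᶜ else -mass π S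
  rw [sum_sum_quadForm_ite, flow_self π hP.1.2, flow_compl_self hP, flow_comm hP.2 Sᶜ S] at hQ
  have hab := mass_add_mass_compl hsum S
  linear_combination hQ + (mass π S * mass π Sᶜ - flow π P S Sᶜ * (mass π S + mass π Sᶜ + 1)) * hab

section Gibbs

variable [Fintype X] [DecidableEq X] {S : Finset X} {x y : X}

def cell (S : Finset X) (x : X) : Finset X := if x ∈ S then S else Sᶜ

theorem cell_of_mem (hx : x ∈ S) : cell S x = S := if_pos hx

theorem cell_of_mem_compl (hx : x ∈ Sᶜ) : cell S x = Sᶜ := if_neg (mem_compl.1 hx)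

variable (π : X → ℝ) (P : Matrix X X ℝ) (S x y)

theorem gibbsTwo_apply :
    gibbsTwo π S x y = if y ∈ cell S x then π y / mass π (cell S x) else 0 := by
  unfold gibbsTwo cell; split_ifs <;> simp_all

theorem gibbsTwo_apply_eq_ite_mem_cell :
    gibbsTwo π S x y = if x ∈ cell S y then π y / mass π (cell S y) else 0 := by
  unfold gibbsTwo cell; split_ifs <;> simp_all

theorem gibbsTwo_mul_apply :
    (gibbsTwo π S * P) x y = (∑ u ∈ cell S x, π u * P u y) / mass π (cell S x) := by
  simp only [mul_apply, gibbsTwo_apply, ite_mul, zero_mul, sum_ite_mem, univ_inter, sum_div]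
  exact sum_congr rfl fun u _ => div_mul_eq_mul_div _ _ _

theorem gibbsTwo_mul_mul_gibbsTwo_apply :
    (gibbsTwo π S * P * gibbsTwo π S) x y
      = π y * (flow π P (cell S x) (cell S y) / (mass π (cell S x) * mass π (cell S y))) := by
  simp only [mul_apply (M := gibbsTwo π S * P), gibbsTwo_apply_eq_ite_mem_cell,
    gibbsTwo_mul_apply, mul_ite, mul_zero, sum_ite_mem, univ_inter, flow,
    sum_comm (s := cell S x), sum_div, sum_mul, mul_sum]
  exact sum_congr rfl fun v _ => sum_congr rfl fun u _ => by ring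

end Gibbs

theorem frobSq_eq_sum [Fintype X] (π : X → ℝ) (M : Matrix X X ℝ) :
    frobSq π M = ∑ x, ∑ y, π x * M x y ^ 2 / π y := by
  simp only [frobSq, piAdj, trace, Matrix.diag, mul_apply, of_apply]
  rw [sum_comm]
  exact sum_congr rfl fun x _ => sum_congr rfl fun y _ => by ring

theorem frobSq_gibbsTwo_mul_mul_gibbsTwo_sub_Pimat [Fintype X] [DecidableEq X] {π : X → ℝ}
    (hπ : ∀ x, 0 < π x) (hsum : ∑ x, π x = 1) {P : Matrix X X ℝ} (hP : IsReversible π P)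
    {S : Finset X} (hS : S ≠ ∅) (hS' : S ≠ univ) :
    frobSq π (gibbsTwo π S * P * gibbsTwo π S - Pimat π)
      = (1 - flow π P S Sᶜ / (mass π S * mass π Sᶜ)) ^ 2 := by
  set κ : Finset X → Finset X → ℝ := fun I J => (flow π P I J / (mass π I * mass π J) - 1) ^ 2
  have hM x y : π x * (gibbsTwo π S * P * gibbsTwo π S - Pimat π) x y ^ 2 / π y
      = π x * π y * κ (cell S x) (cell S y) := by
    rw [Matrix.sub_apply, gibbsTwo_mul_mul_gibbsTwo_apply, Pimat, of_apply]
    simp only [κ]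
    field_simp [(hπ y).ne']
  have hblock {A B : Finset X} (hA : ∀ x ∈ A, cell S x = A) (hB : ∀ y ∈ B, cell S y = B) :
      ∑ x ∈ A, ∑ y ∈ B, π x * π y * κ (cell S x) (cell S y) = κ A B * (mass π A * mass π B) := by
    rw [sum_sum_mul_eq_of_forall fun x hx y hy => by rw [hA x hx, hB y hy], mass, mass,
      sum_mul_sum]
  rw [frobSq_eq_sum]
  simp only [hM]
  rw [sum_sum_eq_blocks S, hblock (fun _ => cell_of_mem) (fun _ => cell_of_mem),
    hblock (fun _ => cell_of_mem) (fun _ => cell_of_mem_compl),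
    hblock (fun _ => cell_of_mem_compl) (fun _ => cell_of_mem),
    hblock (fun _ => cell_of_mem_compl) (fun _ => cell_of_mem_compl)]
  simp only [κ]
  rw [flow_compl_self hP, flow_self π hP.1.2 S, flow_comm hP.2 Sᶜ S]
  have hab := mass_add_mass_compl hsum S
  have ha := mass_pos hπ hS
  have hb := mass_pos hπ (NontrivSet.compl ⟨hS, hS'⟩).1
  field_simp
  rw [show mass π Sᶜ = 1 - mass π S by linarith]
  ring

/-- difference-of-submodular decomposition of ‖G_S P G_S − Π‖_{F,π}. -/
theorem stmt17 [Fintype X] [DecidableEq X] (π : X → ℝ)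
    (hπ : ∀ x, 0 < π x) (hsum : ∑ x, π x = 1)
    (P : Matrix X X ℝ) (hP : IsReversible π P) (hpsd : IsPosSemidefPi π P)
    (S : Finset X) (hS : S ≠ ∅) (hS' : S ≠ Finset.univ) :
    Real.sqrt (frobSq π (gibbsTwo π S * P * gibbsTwo π S - Pimat π))
      = (3 - 1 / (mass π S * mass π Sᶜ))
        + (1 / mass π S) * (∑ x ∈ Sᶜ, ∑ y ∈ Sᶜ, π x * P x y)
        + (1 / mass π Sᶜ) * (∑ x ∈ S, ∑ y ∈ S, π x * P x y) ∧
    SubmodularOn (fun T : Finset X => 3 - 1 / (mass π T * mass π Tᶜ)) ∧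
    SupermodularOn (fun T : Finset X =>
      (1 / mass π T) * ∑ x ∈ Tᶜ, ∑ y ∈ Tᶜ, π x * P x y) ∧
    SupermodularOn (fun T : Finset X =>
      (1 / mass π Tᶜ) * ∑ x ∈ T, ∑ y ∈ T, π x * P x y) := by
  have hprod := supermodularOn_one_div_mass_compl_mul_sum_sum hπ hP.1.1
  refine ⟨?_, (supermodularOn_one_div_mass_mul_mass_compl hπ hsum).const_sub 3,
    by simpa only [compl_compl] using hprod.comp_compl, hprod⟩
  have ha := mass_pos hπ hS
  have hb := mass_pos hπ (NontrivSet.compl ⟨hS, hS'⟩).1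
  have hab := mass_add_mass_compl hsum S
  have hq := flow_le_mass_mul_mass_compl hsum hP hpsd S
  rw [frobSq_gibbsTwo_mul_mul_gibbsTwo_sub_Pimat hπ hsum hP hS hS',
    Real.sqrt_sq (sub_nonneg.2 ((div_le_one (by positivity)).2 hq))]
  change _ = _ + 1 / mass π S * flow π P Sᶜ Sᶜ + 1 / mass π Sᶜ * flow π P S S
  rw [flow_compl_self hP, flow_self π hP.1.2 S]
  field_simp
  linear_combination (flow π P S Sᶜ - mass π S - mass π Sᶜ - 1) * hab

end
end GpgStmt
end

section
/- Let P be π-stationary, ergodic, and positive-definite with respect to ⟨·,·⟩_π, and let G be the Gibbs kernel of a partition with at least two orbits (G ≠ Π), and P ≠ Π. Then GP ≠ Π. -/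
open Finset Matrix

namespace GpgStmt

noncomputable section

variable {X : Type*}

/-- Positive definiteness with respect to ⟨·,·⟩_π. -/
def IsPosDefPi [Fintype X] (π : X → ℝ) (P : Matrix X X ℝ) : Prop :=
  ∀ f : X → ℝ, f ≠ 0 → 0 < ∑ x, ∑ y, π x * f x * P x y * f y

/-- for π-stationary, ergodic, π-positive-definite P with G ≠ Π and
P ≠ Π, we have GP ≠ Π. -/
theorem stmt18 [Fintype X] [DecidableEq X] {k : ℕ} (π : X → ℝ) (o : X → Fin k)
    (hπ : ∀ x, 0 < π x) (hsum : ∑ x, π x = 1) (ho : Function.Surjective o)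
    (P : Matrix X X ℝ) (hP : IsStationary π P) (herg : IsErgodic P)
    (hpd : IsPosDefPi π P)
    (hG : gibbs π o ≠ Pimat π) (hPne : P ≠ Pimat π) :
    gibbs π o * P ≠ Pimat π := by
  intro hcontra
  obtain ⟨x0, y0, hxy⟩ : ∃ x y, gibbs π o x y ≠ Pimat π x y := by
    by_contra h; push_neg at h
    exact hG (by ext x y; exact h x y)
  set r : X → ℝ := fun y => gibbs π o x0 y - π y with hr
  have hrow : ∀ z, ∑ y, r y * P y z = 0 := by
    intro z
    have h1 : (gibbs π o * P) x0 z = π z := by rw [hcontra]; rfl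
    have h2 : ∑ y, π y * P y z = π z := hP.2 z
    rw [Matrix.mul_apply] at h1
    have hsplit : ∑ y, r y * P y z
        = (∑ y, gibbs π o x0 y * P y z) - ∑ y, π y * P y z := by
      rw [← Finset.sum_sub_distrib]
      exact Finset.sum_congr rfl fun y _ => by simp [hr, sub_mul]
    rw [hsplit, h1, h2, sub_self]
  set f : X → ℝ := fun y => r y / π y with hfdef
  have hr0 : r y0 ≠ 0 := by
    intro h
    exact hxy (by simpa [Pimat, sub_eq_zero, hr] using h)
  have hf : f ≠ 0 := by
    intro h
    have := congrFun h y0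
    simp only [hfdef, Pi.zero_apply, div_eq_zero_iff] at this
    rcases this with h1 | h1
    · exact hr0 h1
    · exact (hπ y0).ne' h1
  have hpos := hpd f hf
  have hpf : ∀ x, π x * f x = r x := by
    intro x
    simp only [hfdef]
    rw [mul_comm, div_mul_cancel₀ _ (hπ x).ne']
  have hzero : ∑ x, ∑ y, π x * f x * P x y * f y = 0 := by
    calc ∑ x, ∑ y, π x * f x * P x y * f y
        = ∑ y, ∑ x, r x * P x y * f y := by
          rw [Finset.sum_comm]
          exact Finset.sum_congr rfl fun y _ => Finset.sum_congr rfl fun x _ => by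
            rw [hpf x]
      _ = ∑ y, (∑ x, r x * P x y) * f y := by
          exact Finset.sum_congr rfl fun y _ => (Finset.sum_mul _ _ _).symm
      _ = 0 := by simp [hrow]
  linarith

end
end GpgStmt
end

section
/- Let P be π-reversible, ergodic, and positive-definite, and G the Gibbs kernel of a partition with G ≠ Π and P ≠ Π. Then GPG ≠ Π. -/
open Finset Matrix

namespace GpgStmt

noncomputable section

variable {X : Type*}

set_option linter.unusedSectionVars false

lemma orbMass_pos [Fintype X] {k : ℕ} (π : X → ℝ) (o : X → Fin k)
    (hπ : ∀ x, 0 < π x) (j : Fin k) (x : X) (hx : o x = j) : 0 < orbMass π o j := by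
  apply Finset.sum_pos (fun y _ => hπ y)
  exact ⟨x, by simp [hx]⟩

lemma gibbs_rev [Fintype X] {k : ℕ} (π : X → ℝ) (o : X → Fin k) (x y : X) :
    π x * gibbs π o x y = π y * gibbs π o y x := by
  simp only [gibbs, Matrix.of_apply]
  by_cases hxy : o x = o y
  · rw [if_pos hxy, if_pos hxy.symm, hxy]; ring
  · rw [if_neg hxy, if_neg (fun h => hxy h.symm)]; ring

lemma gibbs_fix [Fintype X] {k : ℕ} (π : X → ℝ) (o : X → Fin k)
    (hπ : ∀ x, 0 < π x) (h : X → ℝ) (c : Fin k → ℝ)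
    (hc : ∀ x, h x = c (o x)) (v : X) :
    ∑ y, gibbs π o v y * h y = h v := by
  have hm : orbMass π o (o v) ≠ 0 := (orbMass_pos π o hπ (o v) v rfl).ne'
  simp only [gibbs, Matrix.of_apply, ite_mul, zero_mul]
  have step : ∀ y, (if o v = o y then π y / orbMass π o (o v) * h y else 0)
      = (if o y = o v then π y else 0) * (c (o v) / orbMass π o (o v)) := by
    intro y; by_cases hy : o y = o v
    · rw [if_pos hy.symm, if_pos hy, hc y, hy]; ring
    · rw [if_neg (fun hh => hy hh.symm), if_neg hy, zero_mul]
  rw [Finset.sum_congr rfl (fun y _ => step y), ← Finset.sum_mul,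
    ← Finset.sum_filter]
  show orbMass π o (o v) * _ = _
  rw [hc v]; field_simp

/-- for π-reversible, ergodic, π-positive-definite P with G ≠ Π and
P ≠ Π, we have GPG ≠ Π. -/
theorem stmt19 [Fintype X] [DecidableEq X] {k : ℕ} (π : X → ℝ) (o : X → Fin k)
    (hπ : ∀ x, 0 < π x) (hsum : ∑ x, π x = 1) (ho : Function.Surjective o)
    (P : Matrix X X ℝ) (hP : IsReversible π P) (herg : IsErgodic P)
    (hpd : IsPosDefPi π P)
    (hG : gibbs π o ≠ Pimat π) (hPne : P ≠ Pimat π) :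
    gibbs π o * P * gibbs π o ≠ Pimat π := by
  intro heq
  -- two points in different orbits
  obtain ⟨x0, y0, hxy⟩ : ∃ x0 y0, o x0 ≠ o y0 := by
    by_contra hcon
    push_neg at hcon
    apply hG
    ext x y
    have hfil : ∀ w : X, Finset.filter (fun z => o z = o w) Finset.univ = Finset.univ := by
      intro w; ext z; simpa using hcon z w
    simp [gibbs, Pimat, orbMass, hfil, hsum, hcon x y]
  set m : ℝ := orbMass π o (o x0) with hm
  set h : X → ℝ := fun x => (if o x = o x0 then (1:ℝ) else 0) - m with hh
  have hc : ∀ x, h x = (fun j => (if j = o x0 then (1:ℝ) else 0) - m) (o x) :=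
    fun x => rfl
  have hmlt : m < 1 := by
    rw [hm, ← hsum, orbMass]
    apply Finset.sum_lt_sum_of_subset (Finset.subset_univ _)
      (Finset.mem_univ y0) _ (hπ y0) (fun y _ _ => (hπ y).le)
    simp [Ne.symm hxy]
  have hne : h ≠ 0 := by
    intro h0
    have : h x0 = 0 := by rw [h0]; rfl
    simp only [hh, if_pos rfl] at this
    norm_num at this
    linarith
  have hsum0 : ∑ x, π x * h x = 0 := by
    have : ∑ x, π x * h x = (∑ x, if o x = o x0 then π x else 0) - m * ∑ x, π x := by
      rw [Finset.mul_sum, ← Finset.sum_sub_distrib]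
      refine Finset.sum_congr rfl fun x _ => ?_
      by_cases hx : o x = o x0 <;> simp [hh, hx] <;> ring
    rw [this, hsum, ← Finset.sum_filter, mul_one]
    simp [hm, orbMass]
  set g : X → ℝ := fun x => π x * h x with hg
  have hGh : (gibbs π o).mulVec h = h := by
    funext v; exact gibbs_fix π o hπ h (fun j => (if j = o x0 then (1:ℝ) else 0) - m) hc v
  have hgG : Matrix.vecMul g (gibbs π o) = g := by
    funext u
    have : ∀ x, g x * gibbs π o x u = π u * (gibbs π o u x * h x) := by
      intro x
      rw [hg]
      calc π x * h x * gibbs π o x u = (π x * gibbs π o x u) * h x := by ring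
        _ = π u * (gibbs π o u x * h x) := by rw [gibbs_rev π o x u]; ring
    calc Matrix.vecMul g (gibbs π o) u = ∑ x, g x * gibbs π o x u := rfl
      _ = π u * ∑ x, gibbs π o u x * h x := by
          rw [Finset.mul_sum]; exact Finset.sum_congr rfl fun x _ => this x
      _ = g u := by rw [gibbs_fix π o hπ h (fun j => (if j = o x0 then (1:ℝ) else 0) - m) hc u]
  have hpos : 0 < ∑ x, ∑ y, π x * h x * P x y * h y := hpd h hne
  have hquad : ∑ x, ∑ y, π x * h x * P x y * h y
      = dotProduct g 
       ((gibbs π o * P * gibbs π o).mulVec h) := by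
    rw [show (gibbs π o * P * gibbs π o).mulVec h
        = (gibbs π o).mulVec (P.mulVec ((gibbs π o).mulVec h)) by
      rw [Matrix.mulVec_mulVec, Matrix.mulVec_mulVec]]
    rw [hGh, Matrix.dotProduct_mulVec, hgG]
    simp only [dotProduct, Matrix.mulVec, dotProduct, hg]
    refine Finset.sum_congr rfl fun x _ => ?_
    rw [Finset.mul_sum]
    refine Finset.sum_congr rfl fun y _ => ?_
    ring
  have hzero : dotProduct g ((Pimat π).mulVec h) = 0 := by
    have : (Pimat π).mulVec h = 0 := by
      funext x
      calc (Pimat π).mulVec h x = ∑ y, π y * h y := rfl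
        _ = 0 := hsum0
    rw [this, dotProduct_zero]
  rw [hquad, heq, hzero] at hpos
  exact lt_irrefl 0 hpos

end
end GpgStmt
end
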